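/- Let a₀, a₁, a₂, a₁₁, a₁₂, a₂₂ : [0, T] → ℝ be differentiable and define the quadratic ansatz V(t, m, v) := a₀(t) + a₁(t)·m + a₂(t)·v + a₁₁(t)·m² + a₁₂(t)·m·v + a₂₂(t)·v². Then the Hamilton–Jacobi–Bellman–Isaacs identity ∂_t V(t, m, v) = H*(m, v, ∂_m V(t, m, v), ∂_v V(t, m, v)) holds for all t ∈ [0, T] and all (m, v) ∈ ℝ² if and only if the six coefficient functions satisfy, for all t ∈ [0, T], the coupled Riccati ODE system: ȧ₀ = Σ²a₂ + (λ_m − η²/(4R_u))a₁² + (λ_v − χ²/(4R))a₂²; ȧ₁ = Σ²a₁₂ + (4λ_m − η²/R_u)a₁a₁₁ + (2λ_v − χ²/(2R))a₂a₁₂; ȧ₂ = w̄₂ − 2βa₂ + 2Σ²a₂₂ + (2λ_m − η²/(2R_u))a₁a₁₂ + (4λ_v − χ²/R)a₂a₂₂ − (ηκ/(2R_u))a₁; ȧ₁₁ = w₁ + (4λ_m − η²/R_u)a₁₁² + (λ_v − χ²/(4R))a₁₂²; ȧ₁₂ = −2βa₁₂ − (ηκ/R_u)a₁₁ + (4λ_m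 − η²/R_u)a₁₁a₁₂ + (4λ_v − χ²/R)a₁₂a₂₂; ȧ₂₂ = −4βa₂₂ − κ²/(4R_u) − (ηκ/(2R_u))a₁₂ + (λ_m − η²/(4R_u))a₁₂² + (4λ_v − χ²/R)a₂₂². -/

import Mathlib

/-!
Both sides of the HJBI identity are quadratic polynomials in `(m, v)`: the left side because
the ansatz is linear in its coefficients, the right side because `H*` is quadratic in
`(m, v, p_m, p_v)` and the gradient of the ansatz is affine in `(m, v)`. Two such
polynomials agree everywhere iff they agree at `(0,0), (±1,0), (0,±1), (1,1)`, i.e. iff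
their six coefficients agree, and matching coefficients of `H*(m, v, ∇V)` gives exactly the Riccati system.
-/

/-- The optimized Hamiltonian
`H*(m, v, pm, pv) = λm·pm² + λv·pv² + w₁·m² + w̄₂·v + pv·(−2βv + Σ²)
  − (η·pm + κ·v)²/(4Ru) − χ²·pv²/(4R)`. -/
noncomputable def Hstar (β η χ w₁ w₂bar κ Ru R lm lv Sig2 m v pm pv : ℝ) : ℝ :=
  lm * pm ^ 2 + lv * pv ^ 2 + w₁ * m ^ 2 + w₂bar * v + pv * (-2 * β * v + Sig2)
    - (η * pm + κ * v) ^ 2 / (4 * Ru) - χ ^ 2 * pv ^ 2 / (4 * R)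

def quadPoly {K : Type*} [CommSemiring K] (c0 c1 c2 c11 c12 c22 m v : K) : K :=
  c0 + c1 * m + c2 * v + c11 * m ^ 2 + c12 * (m * v) + c22 * v ^ 2

theorem quadPoly_eq_quadPoly_iff {K : Type*} [Field K] [CharZero K]
    {c0 c1 c2 c11 c12 c22 d0 d1 d2 d11 d12 d22 : K} :
    (∀ m v, quadPoly c0 c1 c2 c11 c12 c22 m v = quadPoly d0 d1 d2 d11 d12 d22 m v) ↔
      c0 = d0 ∧ c1 = d1 ∧ c2 = d2 ∧ c11 = d11 ∧ c12 = d12 ∧ c22 = d22 := by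
  constructor
  · intro h
    have h00 := h 0 0
    have h10 := h 1 0
    have hm0 := h (-1) 0
    have h01 := h 0 1
    have h0m := h 0 (-1)
    have h11 := h 1 1
    simp only [quadPoly] at h00 h10 hm0 h01 h0m h11
    refine ⟨?_, ?_, ?_, ?_, ?_, ?_⟩
    · linear_combination h00
    · linear_combination (h10 - hm0) / 2
    · linear_combination (h01 - h0m) / 2
    · linear_combination (h10 + hm0) / 2 - h00
    · linear_combination h11 - h10 - h01 + h00
    · linear_combination (h01 + h0m) / 2 - h00
  · rintro ⟨rfl, rfl, rfl, rfl, rfl, rfl⟩ m v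
    rfl

theorem hasDerivAt_quadPoly {𝕜 : Type*} [NontriviallyNormedField 𝕜]
    {a0 a1 a2 a11 a12 a22 : 𝕜 → 𝕜} {a0' a1' a2' a11' a12' a22' t : 𝕜} (m v : 𝕜)
    (h0 : HasDerivAt a0 a0' t) (h1 : HasDerivAt a1 a1' t) (h2 : HasDerivAt a2 a2' t)
    (h11 : HasDerivAt a11 a11' t) (h12 : HasDerivAt a12 a12' t)
    (h22 : HasDerivAt a22 a22' t) :
    HasDerivAt (fun s => quadPoly (a0 s) (a1 s) (a2 s) (a11 s) (a12 s) (a22 s) m v)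
      (quadPoly a0' a1' a2' a11' a12' a22' m v) t :=
  ((((h0.add (h1.mul_const m)).add (h2.mul_const v)).add (h11.mul_const (m ^ 2))).add
    (h12.mul_const (m * v))).add (h22.mul_const (v ^ 2))

theorem Hstar_gradient_quadPoly
    (β η χ w₁ w₂bar κ Ru R lm lv Sig2 a1 a2 a11 a12 a22 m v : ℝ) :
    Hstar β η χ w₁ w₂bar κ Ru R lm lv Sig2 m v
        (a1 + 2 * a11 * m + a12 * v) (a2 + a12 * m + 2 * a22 * v) =
      quadPoly
        (Sig2 * a2 + (lm - η ^ 2 / (4 * Ru)) * a1 ^ 2 + (lv - χ ^ 2 / (4 * R)) * a2 ^ 2)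
        (Sig2 * a12 + (4 * lm - η ^ 2 / Ru) * a1 * a11
          + (2 * lv - χ ^ 2 / (2 * R)) * a2 * a12)
        (w₂bar - 2 * β * a2 + 2 * Sig2 * a22 + (2 * lm - η ^ 2 / (2 * Ru)) * a1 * a12
          + (4 * lv - χ ^ 2 / R) * a2 * a22 - η * κ / (2 * Ru) * a1)
        (w₁ + (4 * lm - η ^ 2 / Ru) * a11 ^ 2 + (lv - χ ^ 2 / (4 * R)) * a12 ^ 2)
        (-2 * β * a12 - η * κ / Ru * a11 + (4 * lm - η ^ 2 / Ru) * a11 * a12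
          + (4 * lv - χ ^ 2 / R) * a12 * a22)
        (-4 * β * a22 - κ ^ 2 / (4 * Ru) - η * κ / (2 * Ru) * a12
          + (lm - η ^ 2 / (4 * Ru)) * a12 ^ 2 + (4 * lv - χ ^ 2 / R) * a22 ^ 2)
        m v := by
  simp only [Hstar, quadPoly]
  ring

theorem hjbi_quadratic_ansatz_iff_riccati_general
    (β η χ w₁ w₂bar κ Ru R lm lv σL σc T : ℝ)
    (a0 a1 a2 a11 a12 a22 : ℝ → ℝ)
    (hd0 : Differentiable ℝ a0) (hd1 : Differentiable ℝ a1) (hd2 : Differentiable ℝ a2)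
    (hd11 : Differentiable ℝ a11) (hd12 : Differentiable ℝ a12)
    (hd22 : Differentiable ℝ a22) :
    (∀ t ∈ Set.Icc (0 : ℝ) T, ∀ m v : ℝ,
      deriv (fun s => a0 s + a1 s * m + a2 s * v + a11 s * m ^ 2 + a12 s * (m * v)
          + a22 s * v ^ 2) t
        = Hstar β η χ w₁ w₂bar κ Ru R lm lv (σL ^ 2 + σc ^ 2) m v
            (a1 t + 2 * a11 t * m + a12 t * v) (a2 t + a12 t * m + 2 * a22 t * v))
    ↔ (∀ t ∈ Set.Icc (0 : ℝ) T,
      deriv a0 t = (σL ^ 2 + σc ^ 2) * a2 t + (lm - η ^ 2 / (4 * Ru)) * a1 t ^ 2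
          + (lv - χ ^ 2 / (4 * R)) * a2 t ^ 2 ∧
      deriv a1 t = (σL ^ 2 + σc ^ 2) * a12 t + (4 * lm - η ^ 2 / Ru) * a1 t * a11 t
          + (2 * lv - χ ^ 2 / (2 * R)) * a2 t * a12 t ∧
      deriv a2 t = w₂bar - 2 * β * a2 t + 2 * (σL ^ 2 + σc ^ 2) * a22 t
          + (2 * lm - η ^ 2 / (2 * Ru)) * a1 t * a12 t
          + (4 * lv - χ ^ 2 / R) * a2 t * a22 t - η * κ / (2 * Ru) * a1 t ∧
      deriv a11 t = w₁ + (4 * lm - η ^ 2 / Ru) * a11 t ^ 2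
          + (lv - χ ^ 2 / (4 * R)) * a12 t ^ 2 ∧
      deriv a12 t = -2 * β * a12 t - η * κ / Ru * a11 t
          + (4 * lm - η ^ 2 / Ru) * a11 t * a12 t
          + (4 * lv - χ ^ 2 / R) * a12 t * a22 t ∧
      deriv a22 t = -4 * β * a22 t - κ ^ 2 / (4 * Ru) - η * κ / (2 * Ru) * a12 t
          + (lm - η ^ 2 / (4 * Ru)) * a12 t ^ 2
          + (4 * lv - χ ^ 2 / R) * a22 t ^ 2) := by
  refine forall₂_congr fun t _ =>
    Iff.trans (forall₂_congr fun m v => ?_) quadPoly_eq_quadPoly_iff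
  exact Eq.congr
    (hasDerivAt_quadPoly m v (hd0 t).hasDerivAt (hd1 t).hasDerivAt (hd2 t).hasDerivAt
      (hd11 t).hasDerivAt (hd12 t).hasDerivAt (hd22 t).hasDerivAt).deriv
    (Hstar_gradient_quadPoly ..)

/-- Let `a₀, a₁, a₂, a₁₁, a₁₂, a₂₂` be differentiable and define the
quadratic ansatz `V(t, m, v) = a₀(t) + a₁(t)m + a₂(t)v + a₁₁(t)m² + a₁₂(t)mv + a₂₂(t)v²`.
Then the HJBI identity `∂ₜV(t,m,v) = H*(m, v, ∂ₘV, ∂ᵥV)` holds for all `t ∈ [0, T]` and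
all `(m, v) ∈ ℝ²` iff the six coefficients satisfy the coupled Riccati ODE system on
`[0, T]`. -/
theorem hjbi_quadratic_ansatz_iff_riccati
    (β η χ w₁ w₂bar κ Ru R lm lv σL σc T : ℝ)
    (hβ : 0 < β) (hη : 0 < η) (hχ : 0 < χ) (hw₁ : 0 < w₁) (hw₂ : 0 < w₂bar)
    (hκ : 0 < κ) (hRu : 0 < Ru) (hR : 0 < R) (hlm : 0 < lm) (hlv : 0 < lv) (hT : 0 < T)
    (a0 a1 a2 a11 a12 a22 : ℝ → ℝ)
    (hd0 : Differentiable ℝ a0) (hd1 : Differentiable ℝ a1) (hd2 : Differentiable ℝ a2)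
    (hd11 : Differentiable ℝ a11) (hd12 : Differentiable ℝ a12)
    (hd22 : Differentiable ℝ a22) :
    (∀ t ∈ Set.Icc (0 : ℝ) T, ∀ m v : ℝ,
      deriv (fun s => a0 s + a1 s * m + a2 s * v + a11 s * m ^ 2 + a12 s * (m * v)
          + a22 s * v ^ 2) t
        = Hstar β η χ w₁ w₂bar κ Ru R lm lv (σL ^ 2 + σc ^ 2) m v
            (a1 t + 2 * a11 t * m + a12 t * v) (a2 t + a12 t * m + 2 * a22 t * v))
    ↔ (∀ t ∈ Set.Icc (0 : ℝ) T,
      deriv a0 t = (σL ^ 2 + σc ^ 2) * a2 t + (lm - η ^ 2 / (4 * Ru)) * a1 t ^ 2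
          + (lv - χ ^ 2 / (4 * R)) * a2 t ^ 2 ∧
      deriv a1 t = (σL ^ 2 + σc ^ 2) * a12 t + (4 * lm - η ^ 2 / Ru) * a1 t * a11 t
          + (2 * lv - χ ^ 2 / (2 * R)) * a2 t * a12 t ∧
      deriv a2 t = w₂bar - 2 * β * a2 t + 2 * (σL ^ 2 + σc ^ 2) * a22 t
          + (2 * lm - η ^ 2 / (2 * Ru)) * a1 t * a12 t
          + (4 * lv - χ ^ 2 / R) * a2 t * a22 t - η * κ / (2 * Ru) * a1 t ∧
      deriv a11 t = w₁ + (4 * lm - η ^ 2 / Ru) * a11 t ^ 2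
          + (lv - χ ^ 2 / (4 * R)) * a12 t ^ 2 ∧
      deriv a12 t = -2 * β * a12 t - η * κ / Ru * a11 t
          + (4 * lm - η ^ 2 / Ru) * a11 t * a12 t
          + (4 * lv - χ ^ 2 / R) * a12 t * a22 t ∧
      deriv a22 t = -4 * β * a22 t - κ ^ 2 / (4 * Ru) - η * κ / (2 * Ru) * a12 t
          + (lm - η ^ 2 / (4 * Ru)) * a12 t ^ 2
          + (4 * lv - χ ^ 2 / R) * a22 t ^ 2) :=
  hjbi_quadratic_ansatz_iff_riccati_general β η χ w₁ w₂bar κ Ru R lm lv σL σc T a0 a1 a2 a11 a12 a22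
    hd0 hd1 hd2 hd11 hd12 hd22
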